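/- For positive integers d, n, a, the number of partitions with perimeter n into (d+1)-distinct parts all ≥ a is at most the number of partitions with perimeter n into d-distinct parts all ≥ a. -/

import Mathlib

/-- A partition: a nonempty, nonincreasing list of positive integers. -/
def IsPartition (l : List ℕ) : Prop :=
  l ≠ [] ∧ l.Pairwise (· ≥ ·) ∧ ∀ x ∈ l, 0 < x

/-- Perimeter: (largest part) + (number of parts) - 1. -/
def perimeter (l : List ℕ) : ℕ := l.headI + l.length - 1

/-- d-distinct: consecutive parts differ by at least d. -/
def DDistinct (d : ℕ) (l : List ℕ) : Prop := l.Chain' (fun x y => y + d ≤ x)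

/-!
Keep the largest part and lower every other part by the number of parts below it. This leaves
the largest part and the number of parts, hence the perimeter, unchanged; it narrows the gap
between two consecutive smaller parts by exactly one and widens the gap below the largest part,
so a `(d+1)`-distinct partition becomes `d`-distinct. In a strictly decreasing list with parts
`≥ a`, each part exceeds `a` by at least the number of parts below it, so no part drops under `a`
and the original parts can be read back.
-/

def shrink : List ℕ → List ℕ
  | [] => []
  | x :: xs => (x - xs.length) :: shrink xs

def shrinkTail : List ℕ → List ℕ
  | [] => []
  | x :: xs => x :: shrink xs

theorem length_shrink (l : List ℕ) : (shrink l).length = l.length := by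
  induction l with
  | nil => rfl
  | cons x xs ih => simp [shrink, ih]

theorem add_length_le_of_isChain_gt {a x : ℕ} {xs : List ℕ} (h : (x :: xs).IsChain (· > ·))
    (ha : ∀ y ∈ x :: xs, a ≤ y) : a + xs.length ≤ x := by
  induction xs generalizing x with
  | nil => simpa using ha x (by simp)
  | cons y ys ih =>
    have hy : a + ys.length ≤ y := ih h.tail fun z hz => ha z (List.mem_cons_of_mem _ hz)
    have hxy : y < x := (List.isChain_cons_cons.mp h).1
    simp only [List.length_cons]
    omega

theorem shrink_inj_of_isChain_gt {l l' : List ℕ} (hl : l.IsChain (· > ·))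
    (hl' : l'.IsChain (· > ·)) (h : shrink l = shrink l') : l = l' := by
  induction l generalizing l' with
  | nil => cases l' <;> simp_all [shrink]
  | cons x xs ih =>
    cases l' with
    | nil => simp [shrink] at h
    | cons y ys =>
      simp only [shrink, List.cons.injEq] at h
      have hlen : xs.length = ys.length := by simpa [length_shrink] using congrArg List.length h.2
      have hx := add_length_le_of_isChain_gt (a := 0) hl (by simp)
      have hy := add_length_le_of_isChain_gt (a := 0) hl' (by simp)
      rw [ih hl.tail hl'.tail h.2]
      congr 1
      omega

theorem le_of_mem_shrink {a : ℕ} {l : List ℕ} (hl : l.IsChain (· > ·)) (ha : ∀ y ∈ l, a ≤ y) :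
    ∀ z ∈ shrink l, a ≤ z := by
  induction l with
  | nil => simp [shrink]
  | cons x xs ih =>
    have hx := add_length_le_of_isChain_gt hl ha
    simp only [shrink, List.mem_cons, forall_eq_or_imp]
    exact ⟨by omega, ih hl.tail fun y hy => ha y (List.mem_cons_of_mem _ hy)⟩

theorem isChain_shrink {e : ℕ} {l : List ℕ} (hl : l.IsChain (fun p q => q + (e + 1) ≤ p)) :
    (shrink l).IsChain (fun p q => q + e ≤ p) := by
  induction l with
  | nil => simp [shrink]
  | cons x xs ih =>
    cases xs with
    | nil => simp [shrink]
    | cons y ys =>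
      have hxy : y + (e + 1) ≤ x := (List.isChain_cons_cons.mp hl).1
      have hy := add_length_le_of_isChain_gt (a := 0) (hl.tail.imp fun h => by omega) (by simp)
      refine List.isChain_cons_cons.mpr ⟨?_, ih hl.tail⟩
      simp only [List.length_cons]
      omega

theorem DDistinct.isChain_gt {d : ℕ} {l : List ℕ} (h : DDistinct (d + 1) l) :
    l.IsChain (· > ·) :=
  List.IsChain.imp (fun _ _ hpq => by omega) h

theorem perimeter_shrinkTail (l : List ℕ) : perimeter (shrinkTail l) = perimeter l := by
  cases l <;> simp [shrinkTail, perimeter, length_shrink]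

theorem DDistinct.shrinkTail {d : ℕ} {l : List ℕ} (h : DDistinct (d + 1) l) :
    DDistinct d (shrinkTail l) := by
  cases l with
  | nil => exact List.IsChain.nil
  | cons x xs =>
    refine List.isChain_cons.mpr ⟨?_, isChain_shrink h.tail⟩
    cases xs with
    | nil => simp [shrink]
    | cons y ys =>
      have hxy : y + (d + 1) ≤ x := (List.isChain_cons_cons.mp h).1
      simp only [shrink, List.head?_cons, Option.mem_def, Option.some.injEq, forall_eq']
      omega

theorem le_of_mem_shrinkTail {d a : ℕ} {l : List ℕ} (h : DDistinct (d + 1) l)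
    (ha : ∀ x ∈ l, a ≤ x) : ∀ x ∈ shrinkTail l, a ≤ x := by
  cases l with
  | nil => simp [shrinkTail]
  | cons x xs =>
    simp only [shrinkTail, List.mem_cons, forall_eq_or_imp]
    exact ⟨ha x List.mem_cons_self, le_of_mem_shrink h.isChain_gt.tail
      fun y hy => ha y (List.mem_cons_of_mem _ hy)⟩

theorem IsPartition.shrinkTail {d : ℕ} {l : List ℕ} (hl : IsPartition l)
    (h : DDistinct (d + 1) l) : IsPartition (shrinkTail l) := by
  obtain ⟨hne, -, hpos⟩ := hl
  refine ⟨?_, ?_, le_of_mem_shrinkTail h hpos⟩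
  · cases l <;> simp_all [_root_.shrinkTail]
  · exact List.isChain_iff_pairwise.mp (h.shrinkTail.imp fun _ _ hpq => by omega)

theorem shrinkTail_inj_of_isChain_gt {l l' : List ℕ} (hl : l.IsChain (· > ·))
    (hl' : l'.IsChain (· > ·)) (h : shrinkTail l = shrinkTail l') : l = l' := by
  cases l <;> cases l' <;> simp only [shrinkTail, List.cons.injEq, reduceCtorEq] at h ⊢
  exact ⟨h.1, shrink_inj_of_isChain_gt hl.tail hl'.tail h.2⟩

theorem List.finite_setOf_length_le_forall_le (n m : ℕ) :
    {l : List ℕ | l.length ≤ n ∧ ∀ x ∈ l, x ≤ m}.Finite := by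
  refine ((List.finite_length_le (Set.Iic m) n).image (List.map Subtype.val)).subset ?_
  rintro l ⟨hlen, hle⟩
  lift l to List (Set.Iic m) using hle
  exact ⟨l, by simpa using hlen, rfl⟩

theorem IsPartition.le_headI {l : List ℕ} (hl : IsPartition l) {x : ℕ} (hx : x ∈ l) :
    x ≤ l.headI := by
  obtain ⟨hne, hsorted, -⟩ := hl
  cases l with
  | nil => exact absurd rfl hne
  | cons y ys =>
    rcases List.mem_cons.mp hx with rfl | hx
    · exact le_rfl
    · exact List.rel_of_pairwise_cons hsorted hx

theorem finite_setOf_isPartition_perimeter_eq (n : ℕ) :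
    {l : List ℕ | IsPartition l ∧ perimeter l = n}.Finite := by
  refine (List.finite_setOf_length_le_forall_le n n).subset ?_
  rintro l ⟨hl, rfl⟩
  obtain ⟨y, ys, rfl⟩ := List.exists_cons_of_ne_nil hl.1
  have hy : 0 < y := hl.2.2 y List.mem_cons_self
  refine ⟨?_, fun x hx => ?_⟩ <;> simp only [perimeter, List.headI_cons, List.length_cons]
  · omega
  · have hxy : x ≤ y := hl.le_headI hx
    omega

theorem stmt12_general (d n a : ℕ) :
    Nat.card {l : List ℕ // IsPartition l ∧ perimeter l = n ∧ DDistinct (d + 1) l ∧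
        ∀ x ∈ l, a ≤ x}
      ≤ Nat.card {l : List ℕ // IsPartition l ∧ perimeter l = n ∧ DDistinct d l ∧
          ∀ x ∈ l, a ≤ x} := by
  have : Finite {l : List ℕ // IsPartition l ∧ perimeter l = n ∧ DDistinct d l ∧
      ∀ x ∈ l, a ≤ x} :=
    ((finite_setOf_isPartition_perimeter_eq n).subset fun _ hl => ⟨hl.1, hl.2.1⟩).to_subtype
  refine Nat.card_le_card_of_injective (fun l =>
    ⟨shrinkTail l.1, l.2.1.shrinkTail l.2.2.2.1, (perimeter_shrinkTail l.1).trans l.2.2.1,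
      l.2.2.2.1.shrinkTail, le_of_mem_shrinkTail l.2.2.2.1 l.2.2.2.2⟩) ?_
  intro l l' h
  exact Subtype.ext (shrinkTail_inj_of_isChain_gt l.2.2.2.1.isChain_gt l'.2.2.2.1.isChain_gt
    (congrArg Subtype.val h))

theorem stmt12 (d n a : ℕ) (hd : 0 < d) (hn : 0 < n) (ha : 0 < a) :
    Nat.card {l : List ℕ // IsPartition l ∧ perimeter l = n ∧ DDistinct (d + 1) l ∧
        ∀ x ∈ l, a ≤ x}
      ≤ Nat.card {l : List ℕ // IsPartition l ∧ perimeter l = n ∧ DDistinct d l ∧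
          ∀ x ∈ l, a ≤ x} :=
  stmt12_general d n a
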